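/- Let n ≥ 2, l ≥ 0, λ > 0, and set M_±(z) = M((l±λ)/2, n/2+l, z). For R > 0 define G_R = -M_+(-R²/2)/M_-(-R²/2) and u(r) = r^l ( M_+(-r²/2) + G_R M_-(-r²/2) ). Then the radial bi-drift-Laplacian operator A_r = d²/dr² + ((n-1)/r + r) d/dr - l(l+n-2)/r² satisfies A_r² u = λ² u on (0,R), and u(R) = 0. -/

import Mathlib

/-
Substituting `z = -r²/2` and `u = r^l w(z)` turns `A_r u = μ u` into Kummer's equation
`z w'' + (b - z) w' - a w = 0` with `b = n/2 + l` and `μ = l - 2a`. Hence `r^l M_±(-r²/2)` are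
eigenfunctions of `A_r` with eigenvalues `∓λ`, and `A_r²` multiplies every linear combination of
them by `λ²`. The choice of `G_R` forces `u(R) = 0`; it is legitimate because Kummer's
transformation `M(a, b, z) = e^z M(b - a, b, -z)` shows that `M_-` is positive on `z ≤ 0`, all
coefficients of `M(b - a₋, b, ·)` being positive. Coefficientwise, Kummer's transformation is the
Chu–Vandermonde identity.
-/

open MeasureTheory Real Set

noncomputable section

/-- The Kummer confluent hypergeometric function `M(a,b,z)`. -/
def kummerM (a b z : ℝ) : ℝ :=
  ∑' k : ℕ, ((ascPochhammer ℝ k).eval a / ((ascPochhammer ℝ k).eval b * (Nat.factorial k))) * z ^ k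

/-- The radial drift operator `A_r` in anti-Gauss space with angular momentum `l`. -/
def radialOp (n l : ℕ) (f : ℝ → ℝ) (r : ℝ) : ℝ :=
  deriv (deriv f) r + (((n : ℝ) - 1) / r + r) * deriv f r
    - ((l : ℝ) * ((l : ℝ) + (n : ℝ) - 2)) / r ^ 2 * f r

open scoped Nat
open Finset

def powSeries (c : ℕ → ℝ) (z : ℝ) : ℝ := ∑' k, c k * z ^ k

def derivCoeff (c : ℕ → ℝ) (k : ℕ) : ℝ := (k + 1) * c (k + 1)

def ExpBounded (c : ℕ → ℝ) : Prop := ∃ B C : ℝ, 0 ≤ C ∧ ∀ k, |c k| ≤ B * C ^ k / k !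

namespace ExpBounded

variable {c d : ℕ → ℝ}

theorem summable_abs (hc : ExpBounded c) {r : ℝ} (hr : 0 ≤ r) :
    Summable fun k => |c k| * r ^ k := by
  obtain ⟨B, C, hC, hcB⟩ := hc
  refine .of_nonneg_of_le (fun k => by positivity) (fun k => ?_)
    ((Real.summable_pow_div_factorial (C * r)).mul_left B)
  calc |c k| * r ^ k ≤ B * C ^ k / k ! * r ^ k := by gcongr; exact hcB k
    _ = B * ((C * r) ^ k / k !) := by ring

theorem summable_norm (hc : ExpBounded c) (z : ℝ) : Summable fun k => ‖c k * z ^ k‖ := by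
  simpa [abs_mul, abs_pow] using hc.summable_abs (abs_nonneg z)

theorem summable (hc : ExpBounded c) (z : ℝ) : Summable fun k => c k * z ^ k :=
  (hc.summable_norm z).of_norm

theorem derivCoeff (hc : ExpBounded c) : ExpBounded (derivCoeff c) := by
  obtain ⟨B, C, hC, hcB⟩ := hc
  refine ⟨B * C, C, hC, fun k => ?_⟩
  rw [_root_.derivCoeff, abs_mul, abs_of_nonneg (by positivity)]
  calc ((k : ℝ) + 1) * |c (k + 1)| ≤ (k + 1) * (B * C ^ (k + 1) / (k + 1)!) := by
        gcongr; exact hcB _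
    _ = B * C * C ^ k / k ! := by
        rw [Nat.factorial_succ]; push_cast; field_simp; ring

theorem hasDerivAt_powSeries (hc : ExpBounded c) (z : ℝ) :
    HasDerivAt (powSeries c) (powSeries (_root_.derivCoeff c) z) z := by
  set A := |z| + 1
  have hz : z ∈ Ioo (-A) A := abs_lt.mp (lt_add_one _)
  have hterm : ∀ (k : ℕ) (y : ℝ), y ∈ Ioo (-A) A →
      HasDerivAt (fun x => c k * x ^ k) (c k * (k * y ^ (k - 1))) y :=
    fun k y _ => (hasDerivAt_pow k y).const_mul (c k)
  have hbound : ∀ (k : ℕ) (y : ℝ), y ∈ Ioo (-A) A →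
      ‖c k * (k * y ^ (k - 1))‖ ≤ |c k| * (k * A ^ (k - 1)) := by
    intro k y hy
    rw [norm_mul, norm_mul, norm_pow, Real.norm_eq_abs, Real.norm_natCast]
    gcongr
    exact (abs_lt.mpr hy).le
  have hsum : Summable fun k => |c k| * (k * A ^ (k - 1)) := by
    rw [← summable_nat_add_iff 1]
    refine (hc.derivCoeff.summable_abs (by positivity : (0 : ℝ) ≤ A)).congr fun k => ?_
    rw [_root_.derivCoeff, abs_mul, abs_of_nonneg (by positivity)]
    simp only [Nat.add_sub_cancel, Nat.cast_add, Nat.cast_one]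
    ring
  have h := hasDerivAt_tsum_of_isPreconnected hsum isOpen_Ioo isPreconnected_Ioo hterm hbound hz
    (hc.summable z) hz
  have hsum' : Summable fun k => c k * (k * z ^ (k - 1)) :=
    .of_norm_bounded hsum fun k => hbound k z hz
  suffices powSeries (_root_.derivCoeff c) z = ∑' k, c k * (k * z ^ (k - 1)) by
    rw [this]; exact h
  rw [hsum'.tsum_eq_zero_add, powSeries]
  simp only [Nat.cast_zero, zero_mul, mul_zero, zero_add, Nat.add_sub_cancel, _root_.derivCoeff]
  congr 1 with k
  push_cast; ring

theorem deriv_powSeries (hc : ExpBounded c) :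
    deriv (powSeries c) = powSeries (_root_.derivCoeff c) :=
  funext fun z => (hc.hasDerivAt_powSeries z).deriv

theorem contDiff_powSeries (hc : ExpBounded c) (n : ℕ) : ContDiff ℝ n (powSeries c) := by
  induction n generalizing c with
  | zero => exact contDiff_zero.mpr (continuous_iff_continuousAt.mpr fun z =>
      (hc.hasDerivAt_powSeries z).continuousAt)
  | succ n ih =>
    push_cast
    refine contDiff_succ_iff_deriv.mpr ⟨fun z => (hc.hasDerivAt_powSeries z).differentiableAt,
      by simp, ?_⟩
    rw [hc.deriv_powSeries]
    exact ih hc.derivCoeff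

theorem hasSum_mul_powSeries_derivCoeff (hc : ExpBounded c) (z : ℝ) :
    HasSum (fun k : ℕ => k * c k * z ^ k) (z * powSeries (_root_.derivCoeff c) z) := by
  rw [← hasSum_nat_add_iff' 1]
  simp only [range_one, sum_singleton, CharP.cast_eq_zero, zero_mul, sub_zero]
  refine ((hc.derivCoeff.summable z).hasSum.mul_left z).congr_fun fun k => ?_
  rw [_root_.derivCoeff]; push_cast; ring

theorem powSeries_mul (hc : ExpBounded c) (hd : ExpBounded d) (z : ℝ) :
    powSeries c z * powSeries d z =
      powSeries (fun n => ∑ p ∈ antidiagonal n, c p.1 * d p.2) z := by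
  rw [powSeries, powSeries, tsum_mul_tsum_eq_tsum_sum_antidiagonal_of_summable_norm
    (hc.summable_norm z) (hd.summable_norm z), powSeries]
  congr 1 with n
  rw [sum_mul]
  refine sum_congr rfl fun p hp => ?_
  rw [← mem_antidiagonal.mp hp, pow_add]; ring

end ExpBounded

theorem expBounded_of_abs_succ_le {c : ℕ → ℝ} {C : ℝ} (hC : 0 ≤ C)
    (h : ∀ k, |c (k + 1)| ≤ C * |c k| / (k + 1)) : ExpBounded c := by
  refine ⟨|c 0|, C, hC, fun k => ?_⟩
  induction k with
  | zero => simp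
  | succ k ih =>
    calc |c (k + 1)| ≤ C * |c k| / (k + 1) := h k
      _ ≤ C * (|c 0| * C ^ k / k !) / (k + 1) := by gcongr
      _ = |c 0| * C ^ (k + 1) / (k + 1)! := by
        rw [Nat.factorial_succ]; push_cast; field_simp; ring

theorem expBounded_inv_factorial : ExpBounded fun k => (k ! : ℝ)⁻¹ :=
  ⟨1, 1, zero_le_one, fun k => by simp [abs_of_nonneg]⟩

theorem ExpBounded.neg_one_pow_mul {c : ℕ → ℝ} (hc : ExpBounded c) :
    ExpBounded fun k => (-1) ^ k * c k := by
  simpa [ExpBounded, abs_mul] using hc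

theorem powSeries_neg (c : ℕ → ℝ) (z : ℝ) :
    powSeries c (-z) = powSeries (fun k => (-1) ^ k * c k) z := by
  simp only [powSeries, neg_pow z, mul_comm, mul_left_comm]

theorem exp_eq_powSeries (z : ℝ) : exp z = powSeries (fun k => (k ! : ℝ)⁻¹) z := by
  simp only [exp_eq_exp_ℝ, NormedSpace.exp_eq_tsum_div, powSeries, div_eq_inv_mul]

/-- Chu–Vandermonde for falling factorials at `b + n - 1` and `-x`, in rising-factorial form. -/
theorem ascPochhammer_eval_sub_eq_sum {R : Type*} [CommRing R] (x b : R) (n : ℕ) :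
    (ascPochhammer R n).eval (b - x) = ∑ p ∈ antidiagonal n,
      n.choose p.1 *
        ((ascPochhammer R p.1).eval (b + p.2) * ((-1) ^ p.2 * (ascPochhammer R p.2).eval x)) := by
  have h := Ring.descPochhammer_smeval_add (r := b + n - 1) (s := -x) n (Commute.all _ _)
  simp only [Polynomial.descPochhammer_smeval_eq_ascPochhammer,
    Polynomial.ascPochhammer_smeval_eq_eval] at h
  convert h using 1
  · congr 1; ring
  · refine sum_congr rfl fun p hp => ?_
    have hneg := ascPochhammer_eval_neg_eq_descPochhammer R (x + (p.2 : R) - 1) p.2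
    rw [descPochhammer_eval_eq_ascPochhammer] at hneg
    rw [show x + (p.2 : R) - 1 - p.2 + 1 = x by ring,
      show -(x + (p.2 : R) - 1) = -x - p.2 + 1 by ring] at hneg
    rw [← mem_antidiagonal.mp hp, hneg,
      show b + ((p.1 + p.2 : ℕ) : R) - 1 - p.1 + 1 = b + p.2 by push_cast; ring]

def kummerCoeff (a b : ℝ) (k : ℕ) : ℝ :=
  (ascPochhammer ℝ k).eval a / ((ascPochhammer ℝ k).eval b * k !)

theorem kummerM_eq_powSeries (a b : ℝ) : kummerM a b = powSeries (kummerCoeff a b) := rfl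

section Kummer

variable {a b : ℝ}

theorem kummerCoeff_succ (hb : 0 < b) (k : ℕ) :
    kummerCoeff a b (k + 1) = (a + k) / ((b + k) * (k + 1)) * kummerCoeff a b k := by
  have hpos := ascPochhammer_pos k b hb
  simp only [kummerCoeff, ascPochhammer_succ_eval, Nat.factorial_succ]
  push_cast
  field_simp

theorem expBounded_kummerCoeff (hb : 0 < b) : ExpBounded (kummerCoeff a b) := by
  refine expBounded_of_abs_succ_le (C := |a| / b + 1) (by positivity) fun k => ?_
  have hratio : |a + k| / (b + k) ≤ |a| / b + 1 := by
    rw [div_le_iff₀ (by positivity)]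
    calc |a + k| ≤ |a| + k := by simpa using abs_add_le a k
      _ ≤ (|a| / b + 1) * (b + k) := by
        rw [add_mul, div_mul_eq_mul_div, mul_add, add_div, mul_div_cancel_right₀ _ hb.ne']
        nlinarith [abs_nonneg a, (by positivity : 0 ≤ |a| * k / b)]
  rw [kummerCoeff_succ hb, abs_mul, abs_div, abs_mul, abs_of_pos (by positivity : 0 < b + k),
    abs_of_pos (by positivity : (0 : ℝ) < k + 1)]
  calc |a + k| / ((b + k) * (k + 1)) * |kummerCoeff a b k|
      = |a + k| / (b + k) * |kummerCoeff a b k| / (k + 1) := by field_simp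
    _ ≤ (|a| / b + 1) * |kummerCoeff a b k| / (k + 1) := by gcongr

theorem contDiff_kummerM (hb : 0 < b) (k : ℕ) : ContDiff ℝ k (kummerM a b) :=
  (expBounded_kummerCoeff hb).contDiff_powSeries k

theorem kummerM_ode (hb : 0 < b) (z : ℝ) :
    z * deriv (deriv (kummerM a b)) z + (b - z) * deriv (kummerM a b) z = a * kummerM a b z := by
  have hc := expBounded_kummerCoeff (a := a) hb
  rw [kummerM_eq_powSeries, hc.deriv_powSeries, hc.derivCoeff.deriv_powSeries]
  have hrec : ∀ k : ℕ,
      (k + b) * derivCoeff (kummerCoeff a b) k = (k + a) * kummerCoeff a b k := by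
    intro k
    have := ascPochhammer_pos k b hb
    rw [derivCoeff, kummerCoeff_succ hb]
    field_simp
    ring
  have hsum := (((hc.derivCoeff.hasSum_mul_powSeries_derivCoeff z).add
    ((hc.derivCoeff.summable z).hasSum.mul_left b)).sub
    (hc.hasSum_mul_powSeries_derivCoeff z)).sub ((hc.summable z).hasSum.mul_left a)
  have := hsum.unique (hasSum_zero.congr_fun fun k => by linear_combination (z ^ k) * hrec k)
  simp only [powSeries] at this ⊢
  linear_combination this

theorem sum_antidiagonal_inv_factorial_mul_kummerCoeff (hb : 0 < b) (n : ℕ) :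
    ∑ p ∈ antidiagonal n, (p.1 ! : ℝ)⁻¹ * ((-1) ^ p.2 * kummerCoeff (b - a) b p.2) =
      kummerCoeff a b n := by
  conv_rhs => rw [kummerCoeff, ← sub_sub_cancel b a, ascPochhammer_eval_sub_eq_sum, sum_div]
  refine sum_congr rfl fun p hp => ?_
  obtain rfl := mem_antidiagonal.mp hp
  have hmul : (ascPochhammer ℝ (p.1 + p.2)).eval b =
      (ascPochhammer ℝ p.2).eval b * (ascPochhammer ℝ p.1).eval (b + p.2) := by
    rw [add_comm, ← ascPochhammer_mul, Polynomial.eval_mul, Polynomial.eval_comp]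
    simp
  have hfac : ((p.1 + p.2)! : ℝ) = (p.1 + p.2).choose p.1 * p.1 ! * p.2 ! := by
    rw [Nat.choose_symm_add]
    exact_mod_cast (Nat.add_choose_mul_factorial_mul_factorial p.1 p.2).symm
  have h1 := ascPochhammer_pos p.1 (b + p.2) (by positivity)
  have h2 := ascPochhammer_pos p.2 b hb
  have h3 : ((p.1 + p.2).choose p.1 : ℝ) ≠ 0 :=
    Nat.cast_ne_zero.mpr (Nat.choose_pos (Nat.le_add_right _ _)).ne'
  rw [hmul, hfac, kummerCoeff]
  field_simp

theorem kummerM_eq_exp_mul (hb : 0 < b) (z : ℝ) :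
    kummerM a b z = exp z * kummerM (b - a) b (-z) := by
  rw [exp_eq_powSeries, kummerM_eq_powSeries, kummerM_eq_powSeries, powSeries_neg,
    expBounded_inv_factorial.powSeries_mul (expBounded_kummerCoeff hb).neg_one_pow_mul]
  simp only [sum_antidiagonal_inv_factorial_mul_kummerCoeff hb]

theorem kummerM_pos_of_nonneg (ha : 0 < a) (hb : 0 < b) {z : ℝ} (hz : 0 ≤ z) :
    0 < kummerM a b z := by
  rw [kummerM_eq_powSeries]
  refine (expBounded_kummerCoeff hb).summable z |>.tsum_pos (fun k => ?_) 0
    (by simp [kummerCoeff])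
  have := ascPochhammer_pos k a ha
  have := ascPochhammer_pos k b hb
  exact mul_nonneg (by rw [kummerCoeff]; positivity) (pow_nonneg hz k)

theorem kummerM_pos_of_nonpos (hab : a < b) (hb : 0 < b) {z : ℝ} (hz : z ≤ 0) :
    0 < kummerM a b z := by
  rw [kummerM_eq_exp_mul hb]
  exact mul_pos (exp_pos z) (kummerM_pos_of_nonneg (sub_pos.mpr hab) hb (neg_nonneg.mpr hz))

end Kummer

section Radial

variable {n l : ℕ}

theorem radialOp_congr {f g : ℝ → ℝ} {r : ℝ} (h : f =ᶠ[nhds r] g) :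
    radialOp n l f r = radialOp n l g r := by
  rw [radialOp, radialOp, h.deriv.deriv_eq, h.deriv_eq, h.eq_of_nhds]

theorem radialOp_linear_comb {f g : ℝ → ℝ} (hf : ContDiff ℝ 2 f) (hg : ContDiff ℝ 2 g)
    (α β r : ℝ) : radialOp n l (fun s => α * f s + β * g s) r =
      α * radialOp n l f r + β * radialOp n l g r := by
  have hf1 := hf.differentiable two_ne_zero
  have hg1 := hg.differentiable two_ne_zero
  have hd : deriv (fun s => α * f s + β * g s) = fun s => α * deriv f s + β * deriv g s :=
    funext fun s => (((hf1 s).hasDerivAt.const_mul α).add ((hg1 s).hasDerivAt.const_mul β)).deriv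
  have hdd : deriv (fun s => α * deriv f s + β * deriv g s) r =
      α * deriv (deriv f) r + β * deriv (deriv g) r :=
    (((hf.differentiable_deriv_two r).hasDerivAt.const_mul α).add
      ((hg.differentiable_deriv_two r).hasDerivAt.const_mul β)).deriv
  rw [radialOp, radialOp, radialOp, hd, hdd]
  ring

theorem hasDerivAt_comp_neg_sq_div_two {F F' : ℝ → ℝ} (hF : ∀ z, HasDerivAt F (F' z) z)
    (s : ℝ) :
    HasDerivAt (fun s => F (-s ^ 2 / 2)) (F' (-s ^ 2 / 2) * -s) s := by
  have hq : HasDerivAt (fun s : ℝ => -s ^ 2 / 2) (-s) s :=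
    ((hasDerivAt_pow 2 s).fun_neg.div_const 2).congr_deriv (by ring)
  exact (hF _).comp s hq

-- The truncated subtractions in the exponents are harmless: the prefactor vanishes when they
-- truncate.
theorem natCast_mul_pow_pred_mul_self (l : ℕ) (r : ℝ) :
    (l : ℝ) * r ^ (l - 1) * r = l * r ^ l := by
  cases l
  · simp
  · simp [pow_succ]; ring

theorem natCast_mul_pow_pred_pred_mul_sq (l : ℕ) (r : ℝ) :
    (l : ℝ) * ((l - 1 : ℕ) : ℝ) * r ^ (l - 1 - 1) * r ^ 2 = l * (l - 1) * r ^ l := by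
  rcases l with _ | _ | l <;> simp [pow_succ]; ring

theorem radialOp_pow_mul_comp_eq {F : ℝ → ℝ} {a : ℝ} (hF : ContDiff ℝ 2 F)
    (hode : ∀ z, z * deriv (deriv F) z + ((n : ℝ) / 2 + l - z) * deriv F z = a * F z)
    {r : ℝ} (hr : r ≠ 0) :
    radialOp n l (fun s => s ^ l * F (-s ^ 2 / 2)) r =
      (l - 2 * a) * (r ^ l * F (-r ^ 2 / 2)) := by
  have hF1 : ∀ z, HasDerivAt F (deriv F z) z :=
    fun z => (hF.differentiable two_ne_zero z).hasDerivAt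
  have hF2 : ∀ z, HasDerivAt (deriv F) (deriv (deriv F) z) z :=
    fun z => (hF.differentiable_deriv_two z).hasDerivAt
  have hd : deriv (fun s => s ^ l * F (-s ^ 2 / 2)) = fun s =>
      l * s ^ (l - 1) * F (-s ^ 2 / 2) + s ^ l * (deriv F (-s ^ 2 / 2) * -s) :=
    funext fun s => ((hasDerivAt_pow l s).mul (hasDerivAt_comp_neg_sq_div_two hF1 s)).deriv
  have hdd : HasDerivAt
      (fun s => l * s ^ (l - 1) * F (-s ^ 2 / 2) + s ^ l * (deriv F (-s ^ 2 / 2) * -s)) _ r :=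
    (((hasDerivAt_pow (l - 1) r).const_mul (l : ℝ)).mul
      (hasDerivAt_comp_neg_sq_div_two hF1 r)).add
      ((hasDerivAt_pow l r).mul ((hasDerivAt_comp_neg_sq_div_two hF2 r).mul (hasDerivAt_neg r)))
  rw [radialOp, hd, hdd.deriv]
  have h1 := natCast_mul_pow_pred_mul_self l r
  have h2 := natCast_mul_pow_pred_pred_mul_sq l r
  have h := hode (-r ^ 2 / 2)
  beta_reduce
  -- Atoms, so that `field_simp` does not rewrite the arguments `-r ^ 2 / 2`.
  set G0 := F (-r ^ 2 / 2)
  set G1 := deriv F (-r ^ 2 / 2)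
  set G2 := deriv (deriv F) (-r ^ 2 / 2)
  field_simp
  linear_combination
    (-2 * r ^ 2 * r ^ l) * h + G0 * h2 + ((n - 1 + r ^ 2) * G0 - 2 * r ^ 2 * G1) * h1

theorem radialOp_radialOp_linear_comb_of_eigen {f g : ℝ → ℝ} {μ : ℝ}
    (hf : ContDiff ℝ 2 f) (hg : ContDiff ℝ 2 g)
    (hAf : ∀ r ≠ 0, radialOp n l f r = -μ * f r)
    (hAg : ∀ r ≠ 0, radialOp n l g r = μ * g r) (α β : ℝ) {r : ℝ} (hr : r ≠ 0) :
    radialOp n l (radialOp n l fun s => α * f s + β * g s) r =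
      μ ^ 2 * (α * f r + β * g r) := by
  have hev : radialOp n l (fun s => α * f s + β * g s) =ᶠ[nhds r]
      fun s => (-μ * α) * f s + (μ * β) * g s := by
    filter_upwards [isOpen_ne.mem_nhds hr] with s hs
    rw [radialOp_linear_comb hf hg, hAf s hs, hAg s hs]
    ring
  rw [radialOp_congr hev, radialOp_linear_comb hf hg, hAf r hr, hAg r hr]
  ring

end Radial

def radialKummer (l : ℕ) (a b r : ℝ) : ℝ := r ^ l * kummerM a b (-r ^ 2 / 2)

theorem contDiff_radialKummer (l : ℕ) {a b : ℝ} (hb : 0 < b) :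
    ContDiff ℝ 2 (radialKummer l a b) := by
  have := contDiff_kummerM (a := a) hb 2
  unfold radialKummer
  fun_prop

theorem radialOp_radialKummer {n l : ℕ} (a : ℝ) (hb : 0 < (n : ℝ) / 2 + l) {r : ℝ}
    (hr : r ≠ 0) :
    radialOp n l (radialKummer l a (n / 2 + l)) r = (l - 2 * a) * radialKummer l a (n / 2 + l) r :=
  radialOp_pow_mul_comp_eq (contDiff_kummerM hb 2) (kummerM_ode hb) hr

theorem stmt13_general (n l : ℕ) (hn : 2 ≤ n) (lam R : ℝ) (hlam : 0 < lam)
    (Mp Mm : ℝ → ℝ)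
    (hMp : Mp = fun z => kummerM (((l : ℝ) + lam) / 2) ((n : ℝ) / 2 + (l : ℝ)) z)
    (hMm : Mm = fun z => kummerM (((l : ℝ) - lam) / 2) ((n : ℝ) / 2 + (l : ℝ)) z)
    (GR : ℝ) (hGR : GR = -Mp (-R ^ 2 / 2) / Mm (-R ^ 2 / 2))
    (u : ℝ → ℝ)
    (hu : u = fun r => r ^ l * (Mp (-r ^ 2 / 2) + GR * Mm (-r ^ 2 / 2))) :
    (∀ r ∈ Ioo (0 : ℝ) R, radialOp n l (radialOp n l u) r = lam ^ 2 * u r)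
    ∧ u R = 0 := by
  subst hMp hMm
  have hb : (0 : ℝ) < n / 2 + l := by
    have : (2 : ℝ) ≤ n := by exact_mod_cast hn
    positivity
  have hu' : u = fun s => 1 * radialKummer l ((l + lam) / 2) (n / 2 + l) s
      + GR * radialKummer l ((l - lam) / 2) (n / 2 + l) s := by
    rw [hu]; ext s; unfold radialKummer; ring
  refine ⟨fun r hr => ?_, ?_⟩
  · rw [hu']
    refine radialOp_radialOp_linear_comb_of_eigen (contDiff_radialKummer l hb)
      (contDiff_radialKummer l hb) (fun s hs => ?_) (fun s hs => ?_) 1 GR hr.1.ne' <;>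
    · rw [radialOp_radialKummer _ hb hs]; ring
  · have hab : ((l : ℝ) - lam) / 2 < n / 2 + l := by
      linarith [(n.cast_nonneg : (0 : ℝ) ≤ n)]
    have hne : kummerM ((l - lam) / 2) (n / 2 + l) (-R ^ 2 / 2) ≠ 0 :=
      (kummerM_pos_of_nonpos hab hb (by nlinarith)).ne'
    rw [hu, hGR]
    beta_reduce
    rw [div_mul_cancel₀ _ hne, add_neg_cancel, mul_zero]

/-- `u(r) = r^l (M₊(-r²/2) + G_R M₋(-r²/2))` satisfies `A_r² u = λ² u`
on `(0,R)` and `u(R) = 0`. -/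
theorem stmt13 (n l : ℕ) (hn : 2 ≤ n) (lam R : ℝ) (hlam : 0 < lam) (hR : 0 < R)
    (Mp Mm : ℝ → ℝ)
    (hMp : Mp = fun z => kummerM (((l : ℝ) + lam) / 2) ((n : ℝ) / 2 + (l : ℝ)) z)
    (hMm : Mm = fun z => kummerM (((l : ℝ) - lam) / 2) ((n : ℝ) / 2 + (l : ℝ)) z)
    (GR : ℝ) (hGR : GR = -Mp (-R ^ 2 / 2) / Mm (-R ^ 2 / 2))
    (u : ℝ → ℝ)
    (hu : u = fun r => r ^ l * (Mp (-r ^ 2 / 2) + GR * Mm (-r ^ 2 / 2))) :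
    (∀ r ∈ Ioo (0 : ℝ) R, radialOp n l (radialOp n l u) r = lam ^ 2 * u r)
    ∧ u R = 0 :=
  stmt13_general n l hn lam R hlam Mp Mm hMp hMm GR hGR u hu
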